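/- Let T be a tournament and R ⊆ V(T). If the directed domination graph of T[R] contains a directed cycle C with R \ V(C) ≠ ∅, then R is not a minimal τ-retentive set of T. -/

import Mathlib

/-!
A vertex that dominates every other member of a τ-retentive set lies in it (induct on the
tournament: it lies in the in-neighbourhood of any other member, where τ is already inside the
set). So if `u` is the captain of `v` in a τ-retentive `R`, then `τ(N⁻(v)) ⊆ R` is dominated by
`u`, every minimal τ-retentive subset of `N⁻(v)` contains `u`, and by asymmetry it is `{u}`.
Hence any nonempty `B ⊆ R` in which every vertex has its captain in `B` is τ-retentive; the
vertices of a cycle of the domination graph form such a `B`, which is proper when `R ⊄ V(C)`.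
-/

variable {V : Type}

/-- Inneighbors of `v` inside the subtournament on `s` (excluding `v` itself). -/
def inn [DecidableEq V] (r : V → V → Prop) [DecidableRel r] (s : Finset V) (v : V) :
    Finset V :=
  (s.filter fun u => r u v).erase v

lemma inn_card_lt [DecidableEq V] (r : V → V → Prop) [DecidableRel r]
    (s : Finset V) (v : V) (hv : v ∈ s) : (inn r s v).card < s.card := by
  have h1 : inn r s v ⊆ s.erase v := by
    intro x hx
    rcases Finset.mem_erase.mp hx with ⟨hxv, hx2⟩
    exact Finset.mem_erase.mpr ⟨hxv, (Finset.mem_filter.mp hx2).1⟩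
  calc (inn r s v).card ≤ (s.erase v).card := Finset.card_le_card h1
    _ < s.card := Finset.card_erase_lt_of_mem hv

/-- The tournament equilibrium set of the subtournament of `r` on `s`:
the union of all minimal τ-retentive sets. -/
def tau [DecidableEq V] (r : V → V → Prop) [DecidableRel r] (s : Finset V) : Set V :=
  {x | ∃ A : Finset V, x ∈ A ∧ A ⊆ s ∧ A.Nonempty ∧
    (∀ v, v ∈ s → v ∈ A → ((inn r s v).Nonempty → tau r (inn r s v) ⊆ ↑A)) ∧
    ∀ B : Finset V, B ⊆ s → B ⊂ A →
      ¬ (B.Nonempty ∧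
        ∀ v, v ∈ s → v ∈ B → ((inn r s v).Nonempty → tau r (inn r s v) ⊆ ↑B))}
termination_by s.card
decreasing_by
  all_goals exact inn_card_lt r s v (by assumption)

/-- `A` is a τ-retentive set of the tournament on `s`. -/
def Retentive [DecidableEq V] (r : V → V → Prop) [DecidableRel r] (s A : Finset V) : Prop :=
  A ⊆ s ∧ A.Nonempty ∧ ∀ v ∈ A, (inn r s v).Nonempty → tau r (inn r s v) ⊆ ↑A

/-- `A` is a minimal τ-retentive set of the tournament on `s`. -/
def MinRetentive [DecidableEq V] (r : V → V → Prop) [DecidableRel r] (s A : Finset V) : Prop :=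
  Retentive r s A ∧ ∀ B, Retentive r s B → B ⊆ A → B = A

/-- `r` is a tournament on the vertex set `s`. -/
def IsTournament (r : V → V → Prop) (s : Finset V) : Prop :=
  (∀ v ∈ s, ¬ r v v) ∧ ∀ u ∈ s, ∀ v ∈ s, u ≠ v → (r u v ↔ ¬ r v u)

/-- `u` is the captain of `v` in the subtournament on `s`:
`u` dominates `v` and all other inneighbors of `v`. -/
def IsCaptain (r : V → V → Prop) (s : Finset V) (u v : V) : Prop :=
  u ∈ s ∧ v ∈ s ∧ r u v ∧ ∀ w ∈ s, w ≠ u → r w v → r u w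

/-- The (undirected) domination graph of the subtournament on `s`. -/
def domGraph (r : V → V → Prop) (s : Finset V) : SimpleGraph V where
  Adj u v := (IsCaptain r s u v ∨ IsCaptain r s v u) ∧ u ≠ v
  symm := by
    constructor
    intro u v h
    exact ⟨h.1.symm, h.2.symm⟩
  loopless := by
    constructor
    intro u h
    exact h.2 rfl

section

variable {r : V → V → Prop}

lemma IsTournament.mono {s t : Finset V} (hT : IsTournament r s) (hts : t ⊆ s) :
    IsTournament r t :=
  ⟨fun v hv => hT.1 v (hts hv), fun u hu v hv huv => hT.2 u (hts hu) v (hts hv) huv⟩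

lemma IsTournament.asymm {s : Finset V} (hT : IsTournament r s) {u v : V} (hu : u ∈ s)
    (hv : v ∈ s) (huv : r u v) : ¬ r v u := by
  have hne : u ≠ v := by rintro rfl; exact hT.1 u hu huv
  exact (hT.2 u hu v hv hne).mp huv

variable [DecidableEq V] [DecidableRel r]

@[simp]
lemma mem_inn {t : Finset V} {u v : V} : u ∈ inn r t v ↔ u ≠ v ∧ u ∈ t ∧ r u v := by
  simp [inn]

lemma inn_subset (t : Finset V) (v : V) : inn r t v ⊆ t := fun _ hu => (mem_inn.mp hu).2.1

lemma inn_ssubset {t : Finset V} {v : V} (hv : v ∈ t) : inn r t v ⊂ t :=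
  (inn_subset (r := r) t v).ssubset_of_ne fun h =>
    (mem_inn.mp (h.symm ▸ hv : v ∈ inn r t v)).1 rfl

lemma mem_tau_iff {t : Finset V} {x : V} : x ∈ tau r t ↔ ∃ A, MinRetentive r t A ∧ x ∈ A := by
  rw [tau]
  constructor
  · rintro ⟨A, hxA, hAt, hAne, hA, hmin⟩
    refine ⟨A, ⟨⟨hAt, hAne, fun v hv => hA v (hAt hv) hv⟩, fun B hB hBA => ?_⟩, hxA⟩
    by_contra hne
    exact hmin B hB.1 (hBA.ssubset_of_ne hne)
      ⟨hB.2.1, fun v _ hv => hB.2.2 v hv⟩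
  · rintro ⟨A, ⟨⟨hAt, hAne, hA⟩, hmin⟩, hxA⟩
    refine ⟨A, hxA, hAt, hAne, fun v _ hv => hA v hv, fun B hBt hBA hB => hBA.ne ?_⟩
    exact hmin B ⟨hBt, hB.1, fun v hv => hB.2 v (hBt hv) hv⟩ hBA.subset

lemma MinRetentive.coe_subset_tau {t A : Finset V} (hA : MinRetentive r t A) :
    ↑A ⊆ tau r t :=
  fun _ hx => mem_tau_iff.mpr ⟨A, hA, hx⟩

lemma tau_subset (t : Finset V) : tau r t ⊆ ↑t := by
  intro x hx
  obtain ⟨A, hA, hxA⟩ := mem_tau_iff.mp hx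
  exact hA.1.1 hxA

lemma Retentive.exists_minRetentive_subset {t A : Finset V} (hA : Retentive r t A) :
    ∃ B ⊆ A, MinRetentive r t B := by
  induction A using Finset.strongInduction with
  | H A ih =>
    by_cases h : ∃ B, Retentive r t B ∧ B ⊂ A
    · obtain ⟨B, hB, hBA⟩ := h
      obtain ⟨C, hCB, hC⟩ := ih B hBA hB
      exact ⟨C, hCB.trans hBA.subset, hC⟩
    · push Not at h
      refine ⟨A, subset_rfl, hA, fun B hB hBA => ?_⟩
      by_contra hne
      exact h B hB (hBA.ssubset_of_ne hne)

lemma retentive_self {t : Finset V} (ht : t.Nonempty) : Retentive r t t :=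
  ⟨subset_rfl, ht, fun v _ _ => (tau_subset _).trans (Finset.coe_subset.mpr (inn_subset t v))⟩

lemma tau_nonempty {t : Finset V} (ht : t.Nonempty) : (tau r t).Nonempty := by
  obtain ⟨A, -, hA⟩ := (retentive_self (r := r) ht).exists_minRetentive_subset
  obtain ⟨x, hx⟩ := hA.1.2.1
  exact ⟨x, hA.coe_subset_tau hx⟩

lemma Retentive.mem_of_dominates {t A : Finset V} {u : V} (hA : Retentive r t A) (hu : u ∈ t)
    (hdom : ∀ w ∈ A, w ≠ u → r u w) : u ∈ A := by
  induction t using Finset.strongInduction generalizing A with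
  | H t ih =>
    obtain ⟨v, hv⟩ := hA.2.1
    by_cases hvu : v = u
    · exact hvu ▸ hv
    have hu' : u ∈ inn r t v := mem_inn.mpr ⟨Ne.symm hvu, hu, hdom v hv hvu⟩
    obtain ⟨B, -, hB⟩ := (retentive_self (r := r) ⟨u, hu'⟩).exists_minRetentive_subset
    have hBA : ∀ w ∈ B, w ∈ A := fun w hw =>
      Finset.mem_coe.mp (hA.2.2 v hv ⟨u, hu'⟩ (hB.coe_subset_tau hw))
    exact hBA u (ih _ (inn_ssubset (hA.1 hv)) hB.1 hu' fun w hw hwu => hdom w (hBA w hw) hwu)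

lemma MinRetentive.eq_singleton_of_dominates {t A : Finset V} {u : V}
    (hT : IsTournament r t) (hA : MinRetentive r t A) (huA : u ∈ A)
    (hdom : ∀ w ∈ A, w ≠ u → r u w) : A = {u} := by
  have hsingle : Retentive r t {u} := by
    refine ⟨Finset.singleton_subset_iff.mpr (hA.1.1 huA), Finset.singleton_nonempty u, ?_⟩
    intro v hv hne
    rw [Finset.mem_singleton.mp hv] at hne ⊢
    obtain ⟨w, hw⟩ := tau_nonempty (r := r) hne
    obtain ⟨hwu, hwt, hwu'⟩ := mem_inn.mp (tau_subset _ hw)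
    have hwA : w ∈ A := hA.1.2.2 u huA hne hw
    exact absurd hwu' (hT.asymm (hA.1.1 huA) hwt (hdom w hwA hwu))
  exact (hA.2 _ hsingle (Finset.singleton_subset_iff.mpr huA)).symm

lemma tau_subset_singleton_of_dominates {t : Finset V} {u : V} (hT : IsTournament r t)
    (hu : u ∈ t) (hdom : ∀ w ∈ tau r t, w ≠ u → r u w) : tau r t ⊆ {u} := by
  intro x hx
  obtain ⟨A, hA, hxA⟩ := mem_tau_iff.mp hx
  have hdomA : ∀ w ∈ A, w ≠ u → r u w := fun w hw => hdom w (hA.coe_subset_tau hw)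
  have huA := hA.1.mem_of_dominates hu hdomA
  simpa [hA.eq_singleton_of_dominates hT huA hdomA] using hxA

lemma IsCaptain.tau_inn_subset {s R : Finset V} {u v : V} (hT : IsTournament r s)
    (hR : Retentive r s R) (hcap : IsCaptain r R u v) : tau r (inn r s v) ⊆ {u} := by
  obtain ⟨huR, hvR, huv, hdom⟩ := hcap
  have hu : u ∈ inn r s v :=
    mem_inn.mpr ⟨fun h => hT.1 u (hR.1 huR) (h ▸ huv), hR.1 huR, huv⟩
  have hτR : tau r (inn r s v) ⊆ R := hR.2.2 v hvR ⟨u, hu⟩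
  refine tau_subset_singleton_of_dominates (hT.mono (inn_subset s v)) hu fun w hw hwu => ?_
  exact hdom w (hτR hw) hwu (mem_inn.mp (tau_subset _ hw)).2.2

lemma Retentive.of_captains {s R B : Finset V} (hT : IsTournament r s) (hR : Retentive r s R)
    (hBR : B ⊆ R) (hB : B.Nonempty) (hcap : ∀ v ∈ B, ∃ u ∈ B, IsCaptain r R u v) :
    Retentive r s B := by
  refine ⟨hBR.trans hR.1, hB, fun v hv _ => ?_⟩
  obtain ⟨u, huB, hu⟩ := hcap v hv
  exact (hu.tau_inn_subset hT hR).trans (by simpa using huB)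

end

lemma Fin.exists_succ_mod_eq {n : ℕ} (hn : 0 < n) (j : Fin n) :
    ∃ i : Fin n, (⟨(i.val + 1) % n, Nat.mod_lt _ hn⟩ : Fin n) = j := by
  obtain ⟨j, hj⟩ := j
  cases j with
  | zero => exact ⟨⟨n - 1, by omega⟩, Fin.ext (by simp [Nat.sub_add_cancel hn])⟩
  | succ k => exact ⟨⟨k, by omega⟩, Fin.ext (by simp [Nat.mod_eq_of_lt hj])⟩

theorem stmt11_general [DecidableEq V] (r : V → V → Prop) [DecidableRel r] (s : Finset V)
    (hT : IsTournament r s) (R : Finset V)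
    (n : ℕ) (hn : 0 < n) (c : Fin n → V)
    (hcyc : ∀ i : Fin n, IsCaptain r R (c i) (c ⟨(i.val + 1) % n, Nat.mod_lt _ hn⟩))
    (hrem : ∃ x ∈ R, ∀ i, c i ≠ x) :
    ¬ MinRetentive r s R := by
  intro hR
  have hCR : Finset.univ.image c ⊆ R := by
    simpa [Finset.image_subset_iff] using fun i => (hcyc i).1
  have hC : Retentive r s (Finset.univ.image c) := by
    refine hR.1.of_captains hT hCR (Finset.univ_nonempty_iff.mpr ⟨⟨0, hn⟩⟩ |>.image c) ?_
    simp only [Finset.mem_image, Finset.mem_univ, true_and, forall_exists_index,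
      forall_apply_eq_imp_iff, exists_exists_eq_and]
    intro j
    obtain ⟨i, hi⟩ := Fin.exists_succ_mod_eq hn j
    exact ⟨i, hi ▸ hcyc i⟩
  obtain ⟨x, hxR, hx⟩ := hrem
  obtain ⟨i, -, rfl⟩ := Finset.mem_image.mp ((hR.2 _ hC hCR).symm ▸ hxR)
  exact hx i rfl

theorem stmt11 [DecidableEq V] (r : V → V → Prop) [DecidableRel r] (s : Finset V)
    (hT : IsTournament r s) (R : Finset V) (hRs : R ⊆ s)
    (n : ℕ) (hn : 0 < n) (c : Fin n → V) (hinj : Function.Injective c)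
    (hmem : ∀ i, c i ∈ R)
    (hcyc : ∀ i : Fin n, IsCaptain r R (c i) (c ⟨(i.val + 1) % n, Nat.mod_lt _ hn⟩))
    (hrem : ∃ x ∈ R, ∀ i, c i ≠ x) :
    ¬ MinRetentive r s R :=
  stmt11_general r s hT R n hn c hcyc hrem
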